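/- arXiv:1006.4425 — 3 statements merged into one kernel-verified Lean document; each statement's English description precedes it below -/
import Mathlib

section
/- Let S be a countable type, β : ℕ → ℝ≥0∞ with ∑'_{i} β i = 1, and q : ℕ → S → ℝ≥0∞ with ∑'_{x} q i x ≤ 1 for every i. Define p x = ∑'_{i ∈ ℕ} β i * q i x. Let R ∈ ℕ and ε ∈ ℝ≥0∞ be such that ∑_{i=0}^{R} β i ≥ 1 − ε. Then (a) for every x ∈ S, ∑_{i=0}^{R} β i * q i x ≤ p x, and (b) ∑'_{x ∈ S} (p x − ∑_{i=0}^{R} β i * q i x) ≤ ε. -/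
open scoped ENNReal
open Finset

/-! The error at a state `x` is exactly the tail `∑_{i > R} β i * q i x` of the series. Summing
over `x` and swapping the two sums, each `q i` has mass at most `1`, so the total error is at most
the tail mass `∑_{i > R} β i = 1 - ∑_{i ≤ R} β i`, which is at most `ε` by the choice of `R`. -/

namespace ENNReal

/-- Truncated subtraction only recovers the tail when the partial sum is finite. -/
theorem tsum_sub_sum_range {f : ℕ → ℝ≥0∞} {n : ℕ} (hf : ∑ i ∈ range n, f i ≠ ∞) :
    ∑' i, f i - ∑ i ∈ range n, f i = ∑' i, f (i + n) := by
  rw [← ENNReal.summable.sum_add_tsum_nat_add' (k := n), ENNReal.add_sub_cancel_left hf]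

theorem tsum_tsum_mul_le_tsum {ι S : Type*} (β : ι → ℝ≥0∞) {q : ι → S → ℝ≥0∞}
    (hq : ∀ i, ∑' x, q i x ≤ 1) :
    ∑' x, ∑' i, β i * q i x ≤ ∑' i, β i := by
  rw [ENNReal.tsum_comm]
  refine ENNReal.tsum_le_tsum fun i => ?_
  rw [ENNReal.tsum_mul_left]
  exact mul_le_of_le_one_right' (hq i)

end ENNReal

theorem truncated_uniformization_error_general
    {S : Type*}
    (β : ℕ → ℝ≥0∞) (hβ : ∑' i, β i = 1)
    (q : ℕ → S → ℝ≥0∞) (hq : ∀ i, ∑' x, q i x ≤ 1)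
    (p : S → ℝ≥0∞) (hp : ∀ x, p x = ∑' i : ℕ, β i * q i x)
    (R : ℕ) (ε : ℝ≥0∞)
    (hR : 1 - ε ≤ ∑ i ∈ Finset.range (R + 1), β i) :
    (∀ x : S, ∑ i ∈ Finset.range (R + 1), β i * q i x ≤ p x) ∧
      ∑' x : S, (p x - ∑ i ∈ Finset.range (R + 1), β i * q i x) ≤ ε := by
  have hβ_ne_top : ∀ i, β i ≠ ∞ := ENNReal.ne_top_of_tsum_ne_top (hβ ▸ ENNReal.one_ne_top)
  have hq_ne_top : ∀ i x, q i x ≠ ∞ := fun i =>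
    ENNReal.ne_top_of_tsum_ne_top (ne_top_of_le_ne_top ENNReal.one_ne_top (hq i))
  refine ⟨fun x => hp x ▸ ENNReal.sum_le_tsum _, ?_⟩
  have hβ_tail : ∑' i, β (i + (R + 1)) ≤ ε := by
    rw [← ENNReal.tsum_sub_sum_range (ENNReal.sum_ne_top.2 fun i _ => hβ_ne_top i), hβ]
    exact tsub_le_iff_tsub_le.1 hR
  calc ∑' x, (p x - ∑ i ∈ range (R + 1), β i * q i x)
      = ∑' x, ∑' i, β (i + (R + 1)) * q (i + (R + 1)) x := tsum_congr fun x => by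
        rw [hp, ENNReal.tsum_sub_sum_range
          (ENNReal.sum_ne_top.2 fun i _ => ENNReal.mul_ne_top (hβ_ne_top i) (hq_ne_top i x))]
    _ ≤ ∑' i, β (i + (R + 1)) := ENNReal.tsum_tsum_mul_le_tsum _ fun i => hq _
    _ ≤ ε := hβ_tail

/-- Truncation of the uniformization series: the truncated sum underapproximates
the transient probability pointwise, with total error at most `ε`. -/
theorem truncated_uniformization_error
    {S : Type*} [Countable S]
    (β : ℕ → ℝ≥0∞) (hβ : ∑' i, β i = 1)
    (q : ℕ → S → ℝ≥0∞) (hq : ∀ i, ∑' x, q i x ≤ 1)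
    (p : S → ℝ≥0∞) (hp : ∀ x, p x = ∑' i : ℕ, β i * q i x)
    (R : ℕ) (ε : ℝ≥0∞)
    (hR : 1 - ε ≤ ∑ i ∈ Finset.range (R + 1), β i) :
    (∀ x : S, ∑ i ∈ Finset.range (R + 1), β i * q i x ≤ p x) ∧
      ∑' x : S, (p x - ∑ i ∈ Finset.range (R + 1), β i * q i x) ≤ ε :=
  truncated_uniformization_error_general β hβ q hq p hp R ε hR
end

section
/- Let S be a countable type, P : S → S → ℝ≥0∞ a stochastic kernel (∑'_{y} P x y = 1 for every x), U : S → S → ℝ≥0∞ with U x y ≤ P x y for all x, y, and μ, v : S → ℝ≥0∞ with v x ≤ μ x for every x. Let β : ℕ → ℝ≥0∞ with ∑'_{i} β i = 1 and R ∈ ℕ. Then for every x ∈ S: ∑_{i=0}^{R} β i * (v·U^i) x ≤ ∑'_{i ∈ ℕ} β i * (μ·P^i) x. -/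
open scoped ENNReal

/-- The one-step image `v·K` of a vector `v` under a kernel `K`. -/
noncomputable def kernelStep {S : Type*} (v : S → ℝ≥0∞) (K : S → S → ℝ≥0∞) : S → ℝ≥0∞ :=
  fun y => ∑' x, v x * K x y

/-- The `i`-fold iterate `v·K^i` (so `v·K^0 = v` and `v·K^{i+1} = (v·K^i)·K`). -/
noncomputable def kernelIter {S : Type*} (v : S → ℝ≥0∞) (K : S → S → ℝ≥0∞) : ℕ → S → ℝ≥0∞
  | 0 => v
  | i + 1 => kernelStep (kernelIter v K i) K

section Monotonicity

variable {S : Type*} {v w : S → ℝ≥0∞} {K L : S → S → ℝ≥0∞}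

theorem kernelStep_mono (hvw : v ≤ w) (hKL : K ≤ L) : kernelStep v K ≤ kernelStep w L :=
  fun y => ENNReal.tsum_le_tsum fun x => mul_le_mul' (hvw x) (hKL x y)

theorem kernelIter_mono (hvw : v ≤ w) (hKL : K ≤ L) (i : ℕ) :
    kernelIter v K i ≤ kernelIter w L i := by
  induction i with
  | zero => exact hvw
  | succ i ih => exact kernelStep_mono ih hKL

end Monotonicity

theorem uniformization_underapproximation_general
    {S : Type*}
    (P : S → S → ℝ≥0∞)
    (U : S → S → ℝ≥0∞) (hU : ∀ x y, U x y ≤ P x y)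
    (μ v : S → ℝ≥0∞) (hv : ∀ x, v x ≤ μ x)
    (β : ℕ → ℝ≥0∞) (R : ℕ) :
    ∀ x : S,
      ∑ i ∈ Finset.range (R + 1), β i * kernelIter v U i x ≤
        ∑' i : ℕ, β i * kernelIter μ P i x := by
  intro x
  calc ∑ i ∈ Finset.range (R + 1), β i * kernelIter v U i x
      ≤ ∑ i ∈ Finset.range (R + 1), β i * kernelIter μ P i x :=
        Finset.sum_le_sum fun i _ => mul_le_mul_right (kernelIter_mono hv hU i x) (β i)
    _ ≤ ∑' i : ℕ, β i * kernelIter μ P i x := ENNReal.sum_le_tsum _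

/-- Main underapproximation guarantee of the uniformization algorithm: the computed
approximation `∑_{i=0}^R β i * (v·U^i) x` is a pointwise lower bound on the true
transient probability `∑'_{i} β i * (μ·P^i) x`. -/
theorem uniformization_underapproximation
    {S : Type*} [Countable S]
    (P : S → S → ℝ≥0∞) (hP : ∀ x, ∑' y, P x y = 1)
    (U : S → S → ℝ≥0∞) (hU : ∀ x y, U x y ≤ P x y)
    (μ v : S → ℝ≥0∞) (hv : ∀ x, v x ≤ μ x)
    (β : ℕ → ℝ≥0∞) (hβ : ∑' i, β i = 1) (R : ℕ) :
    ∀ x : S,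
      ∑ i ∈ Finset.range (R + 1), β i * kernelIter v U i x ≤
        ∑' i : ℕ, β i * kernelIter μ P i x :=
  uniformization_underapproximation_general P U hU μ v hv β R
end

section
/- Let S be a countable type, P : S → S → ℝ≥0∞ a stochastic kernel (∑'_{y} P x y = 1 for every x), and μ : S → ℝ≥0∞ with ∑'_{x} μ x = 1. Let β : ℕ → ℝ≥0∞ with ∑'_{i} β i = 1 and let R ∈ ℕ, ε ∈ ℝ≥0∞ satisfy ∑_{i=0}^{R} β i ≥ 1 − ε. Define p x = ∑'_{i} β i * (μ·P^i) x and p̂ x = ∑_{i=0}^{R} β i * (μ·P^i) x. Then ∑'_{x ∈ S} (p x − p̂ x) ≤ ε. In particular ∑'_{x} (μ·P^i) x = 1 for every i. -/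
open scoped ENNReal

section Kernel

variable {S : Type*} {K : S → S → ℝ≥0∞}

theorem tsum_kernelStep (v : S → ℝ≥0∞) (K : S → S → ℝ≥0∞) :
    ∑' y, kernelStep v K y = ∑' x, v x * ∑' y, K x y := by
  simp only [kernelStep]
  rw [ENNReal.tsum_comm]
  simp only [ENNReal.tsum_mul_left]

theorem tsum_kernelStep_of_stochastic (hK : ∀ x, ∑' y, K x y = 1) (v : S → ℝ≥0∞) :
    ∑' y, kernelStep v K y = ∑' x, v x := by
  simp only [tsum_kernelStep, hK, mul_one]

theorem tsum_kernelIter_of_stochastic (hK : ∀ x, ∑' y, K x y = 1) (v : S → ℝ≥0∞) (i : ℕ) :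
    ∑' x, kernelIter v K i x = ∑' x, v x := by
  induction i with
  | zero => rfl
  | succ i ih => rw [kernelIter, tsum_kernelStep_of_stochastic hK, ih]

end Kernel

namespace ENNReal

theorem tsum_sub_sum_range_le_tsum_nat_add (f : ℕ → ℝ≥0∞) (n : ℕ) :
    ∑' i, f i - ∑ i ∈ Finset.range n, f i ≤ ∑' i, f (i + n) :=
  tsub_le_iff_left.mpr (ENNReal.summable.sum_add_tsum_nat_add' (f := f) (k := n)).ge

theorem tsum_nat_add_le_of_tsum_sub_le_sum_range {f : ℕ → ℝ≥0∞} {n : ℕ} {ε : ℝ≥0∞}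
    (hf : ∑' i, f i ≠ ∞) (h : ∑' i, f i - ε ≤ ∑ i ∈ Finset.range n, f i) :
    ∑' i, f (i + n) ≤ ε := by
  have hhead : ∑ i ∈ Finset.range n, f i ≠ ∞ := ne_top_of_le_ne_top hf (ENNReal.sum_le_tsum _)
  refine ENNReal.le_of_add_le_add_left hhead ?_
  rw [ENNReal.summable.sum_add_tsum_nat_add' (f := f) (k := n)]
  exact tsub_le_iff_right.mp h

theorem tsum_mixture_sub_sum_range_le {S : Type*} (β : ℕ → ℝ≥0∞) (w : ℕ → S → ℝ≥0∞)
    (hw : ∀ i, ∑' x, w i x ≤ 1) (n : ℕ) :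
    ∑' x, (∑' i, β i * w i x - ∑ i ∈ Finset.range n, β i * w i x) ≤ ∑' i, β (i + n) :=
  calc ∑' x, (∑' i, β i * w i x - ∑ i ∈ Finset.range n, β i * w i x)
      ≤ ∑' x, ∑' i, β (i + n) * w (i + n) x :=
        ENNReal.tsum_le_tsum fun x => tsum_sub_sum_range_le_tsum_nat_add _ n
    _ = ∑' i, β (i + n) * ∑' x, w (i + n) x := by
        rw [ENNReal.tsum_comm]
        simp only [ENNReal.tsum_mul_left]
    _ ≤ ∑' i, β (i + n) :=
        ENNReal.tsum_le_tsum fun i => mul_le_of_le_one_right' (hw (i + n))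

end ENNReal

theorem exact_truncation_error_general
    {S : Type*}
    (P : S → S → ℝ≥0∞) (hP : ∀ x, ∑' y, P x y = 1)
    (μ : S → ℝ≥0∞) (hμ : ∑' x, μ x = 1)
    (β : ℕ → ℝ≥0∞) (hβ : ∑' i, β i = 1)
    (R : ℕ) (ε : ℝ≥0∞)
    (hR : 1 - ε ≤ ∑ i ∈ Finset.range (R + 1), β i)
    (p phat : S → ℝ≥0∞)
    (hp : ∀ x, p x = ∑' i : ℕ, β i * kernelIter μ P i x)
    (hphat : ∀ x, phat x = ∑ i ∈ Finset.range (R + 1), β i * kernelIter μ P i x) :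
    (∑' x : S, (p x - phat x) ≤ ε) ∧ ∀ i : ℕ, ∑' x : S, kernelIter μ P i x = 1 := by
  have hmass : ∀ i, ∑' x, kernelIter μ P i x = 1 := fun i =>
    (tsum_kernelIter_of_stochastic hP μ i).trans hμ
  refine ⟨?_, hmass⟩
  simp only [hp, hphat]
  calc _ ≤ ∑' i, β (i + (R + 1)) :=
        ENNReal.tsum_mixture_sub_sum_range_le β _ (fun i => (hmass i).le) (R + 1)
    _ ≤ ε := ENNReal.tsum_nat_add_le_of_tsum_sub_le_sum_range (by simp [hβ]) (by rwa [hβ])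

/-- If the DTMC step is computed exactly and only the infinite uniformization series
is truncated at `R`, the total approximation error is at most the truncation error `ε`;
in particular each `μ·P^i` is a probability distribution. -/
theorem exact_truncation_error
    {S : Type*} [Countable S]
    (P : S → S → ℝ≥0∞) (hP : ∀ x, ∑' y, P x y = 1)
    (μ : S → ℝ≥0∞) (hμ : ∑' x, μ x = 1)
    (β : ℕ → ℝ≥0∞) (hβ : ∑' i, β i = 1)
    (R : ℕ) (ε : ℝ≥0∞)
    (hR : 1 - ε ≤ ∑ i ∈ Finset.range (R + 1), β i)
    (p phat : S → ℝ≥0∞)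
    (hp : ∀ x, p x = ∑' i : ℕ, β i * kernelIter μ P i x)
    (hphat : ∀ x, phat x = ∑ i ∈ Finset.range (R + 1), β i * kernelIter μ P i x) :
    (∑' x : S, (p x - phat x) ≤ ε) ∧ ∀ i : ℕ, ∑' x : S, kernelIter μ P i x = 1 :=
  exact_truncation_error_general P hP μ hμ β hβ R ε hR p phat hp hphat
end
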